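/- Let a be a real number with a > 2. Then for every natural number n ≥ 1, the maximum of the values B_i(a) over all indices i with 2^{n-1} ≤ i ≤ 2^n equals a^n, and this maximum is attained at i = 2^n. -/
import Mathlib


open Polynomial

/-- The Stern polynomials: `B 0 = 0`, `B 1 = 1`, `B (2n) = t * B n`,
`B (2n+1) = B n + B (n+1)`. -/
noncomputable def stern : ℕ → Polynomial ℤ
  | 0 => 0
  | 1 => 1
  | n + 2 =>
    if _h : n % 2 = 0 then
      X * stern (n / 2 + 1)
    else
      stern (n / 2 + 1) + stern (n / 2 + 2)
  decreasing_by all_goals omega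

lemma stern_two_mul (m : ℕ) : stern (2 * m) = X * stern m := by
  match m with
  | 0 => simp [stern]
  | m + 1 =>
    rw [show 2 * (m + 1) = (2 * m) + 2 by ring, stern]
    simp [Nat.mul_mod_right, Nat.mul_div_cancel_left]

lemma stern_odd (m : ℕ) : stern (2 * m + 1) = stern m + stern (m + 1) := by
  match m with
  | 0 => simp [stern]
  | m + 1 =>
    rw [show 2 * (m + 1) + 1 = (2 * m + 1) + 2 by ring, stern]
    have h1 : (2 * m + 1) % 2 = 1 := by omega
    have h2 : (2 * m + 1) / 2 = m := by omega
    simp [h1, h2]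

lemma stern_nonneg (a : ℝ) (ha : 0 ≤ a) (i : ℕ) : 0 ≤ aeval a (stern i) := by
  induction i using Nat.strong_induction_on with
  | _ i ih =>
    match i, ih with
    | 0, _ => simp [stern]
    | 1, _ => simp [stern]
    | i + 2, ih =>
      rcases Nat.even_or_odd (i + 2) with ⟨m, hm⟩ | ⟨m, hm⟩
      · rw [hm, show m + m = 2 * m by ring, stern_two_mul, map_mul, aeval_X]
        exact mul_nonneg ha (ih m (by omega))
      · rw [hm, stern_odd, map_add]
        exact add_nonneg (ih m (by omega)) (ih (m + 1) (by omega))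

lemma stern_le (a : ℝ) (ha : 2 ≤ a) : ∀ n i, i ≤ 2 ^ n → aeval a (stern i) ≤ a ^ n := by
  have ha0 : (0 : ℝ) ≤ a := by linarith
  intro n
  induction n with
  | zero =>
    intro i hi
    interval_cases i <;> simp [stern]
  | succ n IH =>
    intro i hi
    rcases Nat.even_or_odd i with ⟨m, hm⟩ | ⟨m, hm⟩
    · rw [hm, show m + m = 2 * m by ring, stern_two_mul, map_mul, aeval_X, pow_succ']
      exact mul_le_mul_of_nonneg_left (IH m (by omega)) ha0
    · have hm1 : m + 1 ≤ 2 ^ n := by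
        have : 2 * m + 1 ≤ 2 * 2 ^ n := by rw [← hm] at *; rw [pow_succ] at hi; omega
        omega
      rw [hm, stern_odd, map_add]
      have h1 := IH m (by omega)
      have h2 := IH (m + 1) hm1
      have hpn : (0 : ℝ) ≤ a ^ n := pow_nonneg ha0 n
      calc aeval a (stern m) + aeval a (stern (m + 1)) ≤ a ^ n + a ^ n := by linarith
        _ = 2 * a ^ n := by ring
        _ ≤ a * a ^ n := mul_le_mul_of_nonneg_right ha hpn
        _ = a ^ (n + 1) := (pow_succ' a n).symm

lemma stern_pow (a : ℝ) (n : ℕ) : aeval a (stern (2 ^ n)) = a ^ n := by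
  induction n with
  | zero => simp [stern]
  | succ n IH =>
    rw [pow_succ, mul_comm, stern_two_mul, map_mul, aeval_X, IH, pow_succ']

theorem stern_max_on_dyadic_interval (a : ℝ) (ha : 2 < a) (n : ℕ) (hn : 1 ≤ n) :
    IsGreatest {y : ℝ | ∃ i : ℕ, 2 ^ (n - 1) ≤ i ∧ i ≤ 2 ^ n ∧
        y = Polynomial.aeval a (stern i)} (a ^ n) ∧
    Polynomial.aeval a (stern (2 ^ n)) = a ^ n := by
  have hp := stern_pow a n
  refine ⟨⟨⟨2 ^ n, Nat.pow_le_pow_right (by norm_num) (by omega), le_refl _, hp.symm⟩, ?_⟩, hp⟩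
  rintro y ⟨i, -, hi2, rfl⟩
  exact stern_le a ha.le n i hi2
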